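/- arXiv:1305.3728 — 2 statements merged into one kernel-verified Lean document; each statement's English description precedes it below -/
import Mathlib

section
/- Identifiability lower bound on a small interval: under the assumptions below there exists δ_0 ∈ (0,T] such that for every δ ∈ (0, δ_0] and every pair ϑ, ϑ_0 ∈ Θ, ∫_0^δ ( x(ϑ,t) − x(ϑ_0,t) )² dt ≥ γ² δ³ (ϑ − ϑ_0)² / 6. -/
/-!
The sensitivity `ẋ_t(ϑ)` is given by the variational formula as an integral over `[0, t]` of
`exp (∫ ∂S/∂x) · ∂S/∂ϑ`. Near `t = 0` the exponential factor is close to `1` and, by uniform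
continuity on the compact set `Θ × [0, T]`, the factor `∂S/∂ϑ` along the trajectory stays above
any level below `γ`; hence `ẋ_t(ϑ) ≥ κ t` uniformly in `ϑ` for small `t`, with any fixed `κ < γ`.
The mean value theorem in `ϑ` gives `|x(ϑ,t) − x(ϑ₀,t)| ≥ κ t |ϑ − ϑ₀|`, and integrating the square
over `[0, δ]` yields `κ² δ³ (ϑ − ϑ₀)² / 3`, which is at least `γ² δ³ (ϑ − ϑ₀)² / 6` for `κ = 3γ/4`.
-/

open Real MeasureTheory intervalIntegral
open Set Filter Topology

theorem continuousOn_prod_of_hasDerivAt_fst {β : Type*} [TopologicalSpace β]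
    {f f' : ℝ → β → ℝ} {K : Set ℝ} {I : Set β} {M : ℝ} (hK : Convex ℝ K)
    (hcont : ∀ a ∈ K, ContinuousOn (f a) I)
    (hderiv : ∀ a ∈ K, ∀ t ∈ I, HasDerivAt (f · t) (f' a t) a)
    (hbound : ∀ a ∈ K, ∀ t ∈ I, ‖f' a t‖ ≤ M) :
    ContinuousOn (fun q : ℝ × β => f q.1 q.2) (K ×ˢ I) :=
  continuousOn_prod_of_continuousOn_lipschitzOnWith _ M.toNNReal hcont fun t ht =>
    hK.lipschitzOnWith_of_nnnorm_hasDerivWithin_le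
      (fun a ha => (hderiv a ha t ht).hasDerivWithinAt) fun a ha => by
        rw [← Real.toNNReal_coe (r := ‖f' a t‖₊)]
        exact Real.toNNReal_mono (hbound a ha t ht)

theorem Convex.mul_abs_sub_le_abs_image_sub_of_le_deriv {D : Set ℝ} (hD : Convex ℝ D)
    {f f' : ℝ → ℝ} (hf : ∀ x ∈ D, HasDerivAt f (f' x) x) {C : ℝ}
    (hf' : ∀ x ∈ D, C ≤ f' x) :
    ∀ x ∈ D, ∀ y ∈ D, C * |y - x| ≤ |f y - f x| := by
  have hmono := hD.mul_sub_le_image_sub_of_le_deriv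
    (fun x hx => (hf x hx).continuousAt.continuousWithinAt)
    (fun x hx => (hf x (interior_subset hx)).differentiableAt.differentiableWithinAt)
    (fun x hx => (hf x (interior_subset hx)).deriv ▸ hf' x (interior_subset hx))
  intro x hx y hy
  rcases le_total x y with hxy | hyx
  · rw [abs_of_nonneg (sub_nonneg.2 hxy)]
    exact (hmono x hx y hy hxy).trans (le_abs_self _)
  · rw [abs_sub_comm, abs_of_nonneg (sub_nonneg.2 hyx), abs_sub_comm]
    exact (hmono y hy x hx hyx).trans (le_abs_self _)

theorem mul_cube_div_three_le_integral_of_mul_sq_le {g : ℝ → ℝ} {δ C : ℝ} (hδ : 0 ≤ δ)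
    (hg : IntervalIntegrable g volume 0 δ) (h : ∀ t ∈ Icc 0 δ, C * t ^ 2 ≤ g t) :
    C * δ ^ 3 / 3 ≤ ∫ t in 0..δ, g t := by
  calc C * δ ^ 3 / 3 = ∫ t in 0..δ, C * t ^ 2 := by
        rw [intervalIntegral.integral_const_mul, integral_pow]; ring
    _ ≤ ∫ t in 0..δ, g t :=
        integral_mono_on hδ (Continuous.intervalIntegrable (by fun_prop) _ _) hg h

theorem IsCompact.exists_pos_forall_le_of_continuousOn_prod {α : Type*} [PseudoMetricSpace α]
    {K : Set α} (hK : IsCompact K) {T m m' : ℝ} {φ : α × ℝ → ℝ}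
    (hφ : ContinuousOn φ (K ×ˢ Icc 0 T)) (hφ0 : ∀ a ∈ K, m ≤ φ (a, 0)) (hm' : m' < m) :
    ∃ δ > 0, ∀ a ∈ K, ∀ s ∈ Icc 0 T, s ≤ δ → m' ≤ φ (a, s) := by
  obtain ⟨δ, hδ, hclose⟩ := Metric.uniformContinuousOn_iff_le.1
    ((hK.prod isCompact_Icc).uniformContinuousOn_of_continuous hφ) (m - m') (sub_pos.2 hm')
  refine ⟨δ, hδ, fun a ha s hs hsδ => ?_⟩
  have hdist : dist (a, s) (a, 0) ≤ δ := by
    simpa [Prod.dist_eq, abs_of_nonneg hs.1, hδ.le] using hsδ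
  have h := hclose (a, s) ⟨ha, hs⟩ (a, 0) ⟨ha, le_rfl, hs.1.trans hs.2⟩ hdist
  rw [Real.dist_eq] at h
  linarith [(abs_le.1 h).1, hφ0 a ha]

theorem exp_mul_mul_le_integral_exp_integral_mul {g f : ℝ → ℝ} {a b B m : ℝ} (hab : a ≤ b)
    (hg : ContinuousOn g (Icc a b)) (hf : ContinuousOn f (Icc a b))
    (hgB : ∀ r ∈ Icc a b, |g r| ≤ B) (hm : 0 ≤ m) (hfm : ∀ s ∈ Icc a b, m ≤ f s) :
    exp (-(B * (b - a))) * m * (b - a) ≤ ∫ s in a..b, exp (∫ r in s..b, g r) * f s := by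
  have hB : 0 ≤ B := (abs_nonneg _).trans (hgB a ⟨le_rfl, hab⟩)
  have hexp : ∀ s ∈ Icc a b, -(B * (b - a)) ≤ ∫ r in s..b, g r := fun s hs => by
    have h := norm_integral_le_of_norm_le_const (a := s) (b := b) (C := B) (f := g) fun r hr => by
      rw [uIoc_of_le hs.2] at hr
      rw [Real.norm_eq_abs]
      exact hgB r ⟨hs.1.trans hr.1.le, hr.2⟩
    rw [Real.norm_eq_abs, abs_of_nonneg (sub_nonneg.2 hs.2)] at h
    nlinarith [(abs_le.1 h).1, hs.1]
  have hprim : ContinuousOn (fun s => ∫ r in s..b, g r) (Icc a b) := by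
    have h := continuousOn_primitive_interval_left (μ := volume) (a := a) (b := b) (f := g)
      (by rw [uIcc_of_le hab]; exact hg.integrableOn_Icc)
    rwa [uIcc_of_le hab] at h
  calc exp (-(B * (b - a))) * m * (b - a) = ∫ _ in a..b, exp (-(B * (b - a))) * m := by
        rw [intervalIntegral.integral_const, smul_eq_mul, mul_comm]
    _ ≤ ∫ s in a..b, exp (∫ r in s..b, g r) * f s :=
        integral_mono_on hab intervalIntegrable_const
          ((hprim.rexp.mul hf).intervalIntegrable_of_Icc hab) fun s hs =>
            mul_le_mul (exp_le_exp.2 (hexp s hs)) (hfm s hs) hm (exp_pos _).le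

theorem IsCompact.exists_forall_mul_le_integral_exp_integral_mul {α : Type*}
    [PseudoMetricSpace α] {K : Set α} (hK : IsCompact K) {T γ κ : ℝ} (hT : 0 < T)
    (hκ : 0 ≤ κ) (hκγ : κ < γ) {φ ψ : α × ℝ → ℝ} (hφ : ContinuousOn φ (K ×ˢ Icc 0 T))
    (hψ : ContinuousOn ψ (K ×ˢ Icc 0 T)) (hφ0 : ∀ a ∈ K, γ ≤ φ (a, 0)) :
    ∃ δ₀, 0 < δ₀ ∧ δ₀ ≤ T ∧ ∀ a ∈ K, ∀ t ∈ Icc 0 δ₀,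
      κ * t ≤ ∫ s in 0..t, exp (∫ r in s..t, ψ (a, r)) * φ (a, s) := by
  set m := (κ + γ) / 2 with hm
  obtain ⟨δ₁, hδ₁, hφm⟩ := hK.exists_pos_forall_le_of_continuousOn_prod hφ hφ0
    (show m < γ by linarith [hm])
  obtain ⟨B, hB⟩ := (hK.prod isCompact_Icc).exists_bound_of_continuousOn hψ
  have hsmall : ∀ᶠ δ in 𝓝 (0 : ℝ), κ < exp (-(B * δ)) * m :=
    (Continuous.tendsto (by fun_prop) 0).eventually
      (lt_mem_nhds (by simp only [mul_zero, neg_zero, exp_zero, one_mul]; linarith [hm]))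
  obtain ⟨δ₀, hκδ₀, hδ₀pos, hδ₀le⟩ :=
    ((hsmall.filter_mono nhdsWithin_le_nhds).and (Ioc_mem_nhdsGT (lt_min hT hδ₁))).exists
  refine ⟨δ₀, hδ₀pos, hδ₀le.trans (min_le_left _ _), fun a ha t ⟨ht0, htδ₀⟩ => ?_⟩
  have hIcc : ∀ r ∈ Icc 0 t, (a, r) ∈ K ×ˢ Icc 0 T := fun r hr =>
    ⟨ha, hr.1, hr.2.trans (htδ₀.trans (hδ₀le.trans (min_le_left _ _)))⟩
  have hψB : ∀ r ∈ Icc 0 t, |ψ (a, r)| ≤ B := fun r hr => hB _ (hIcc r hr)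
  have hB0 : 0 ≤ B := (abs_nonneg _).trans (hψB 0 ⟨le_rfl, ht0⟩)
  have hslice : ∀ {χ : α × ℝ → ℝ}, ContinuousOn χ (K ×ˢ Icc 0 T) →
      ContinuousOn (fun r => χ (a, r)) (Icc 0 t) := fun hχ =>
    hχ.comp (Continuous.continuousOn (by fun_prop)) hIcc
  have hm0 : 0 ≤ m := by linarith [hm]
  calc κ * t ≤ exp (-(B * δ₀)) * m * t := by gcongr
    _ ≤ exp (-(B * (t - 0))) * m * (t - 0) := by rw [sub_zero]; gcongr
    _ ≤ ∫ s in 0..t, exp (∫ r in s..t, ψ (a, r)) * φ (a, s) :=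
        exp_mul_mul_le_integral_exp_integral_mul ht0 (hslice hψ) (hslice hφ) hψB
          (by linarith) fun s hs =>
            hφm a ha s (hIcc s hs).2 (hs.2.trans (htδ₀.trans (hδ₀le.trans (min_le_right _ _))))

theorem identifiability_small_interval_lower_bound_general
    (T x0 α β γ : ℝ) (hT : 0 < T) (hγ : 0 < γ)
    (S Sθ Sx : ℝ → ℝ → ℝ → ℝ)
    (U : Set (ℝ × ℝ × ℝ))
    (hUmem : ∀ ϑ ∈ Set.Icc α β, ∀ t ∈ Set.Icc (0 : ℝ) T, ∀ y : ℝ, (ϑ, t, y) ∈ U)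
    (hSθcont : ContinuousOn (fun q : ℝ × ℝ × ℝ => Sθ q.1 q.2.1 q.2.2) U)
    (hSxcont : ContinuousOn (fun q : ℝ × ℝ × ℝ => Sx q.1 q.2.1 q.2.2) U)
    (x xdot : ℝ → ℝ → ℝ)
    (hx0 : ∀ ϑ ∈ Set.Icc α β, x ϑ 0 = x0)
    (hxode : ∀ ϑ ∈ Set.Icc α β, ∀ t ∈ Set.Icc (0 : ℝ) T,
      HasDerivAt (fun s => x ϑ s) (S ϑ t (x ϑ t)) t)
    (hxdot : ∀ ϑ ∈ Set.Icc α β, ∀ t ∈ Set.Icc (0 : ℝ) T,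
      HasDerivAt (fun a => x a t) (xdot ϑ t) ϑ)
    (hxdotcont : ContinuousOn (fun q : ℝ × ℝ => xdot q.1 q.2)
      (Set.Icc α β ×ˢ Set.Icc (0 : ℝ) T))
    (hvar : ∀ ϑ ∈ Set.Icc α β, ∀ t ∈ Set.Icc (0 : ℝ) T,
      xdot ϑ t = ∫ s in (0 : ℝ)..t,
        Real.exp (∫ r in s..t, Sx ϑ r (x ϑ r)) * Sθ ϑ s (x ϑ s))
    (hnondeg : ∀ ϑ ∈ Set.Icc α β, γ ≤ Sθ ϑ 0 x0) :
    ∃ δ₀ : ℝ, 0 < δ₀ ∧ δ₀ ≤ T ∧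
      ∀ δ : ℝ, 0 < δ → δ ≤ δ₀ →
        ∀ ϑ ∈ Set.Icc α β, ∀ ϑ₀ ∈ Set.Icc α β,
          γ ^ 2 * δ ^ 3 * (ϑ - ϑ₀) ^ 2 / 6 ≤
            ∫ t in (0 : ℝ)..δ, (x ϑ t - x ϑ₀ t) ^ 2 := by
  have hxt : ∀ a ∈ Icc α β, ContinuousOn (x a) (Icc 0 T) := fun a ha t ht =>
    (hxode a ha t ht).continuousAt.continuousWithinAt
  obtain ⟨M, hM⟩ := (isCompact_Icc.prod isCompact_Icc).exists_bound_of_continuousOn hxdotcont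
  have htraj : ContinuousOn (fun q : ℝ × ℝ => (q.1, q.2, x q.1 q.2)) (Icc α β ×ˢ Icc 0 T) :=
    continuousOn_fst.prodMk <| continuousOn_snd.prodMk <|
      continuousOn_prod_of_hasDerivAt_fst (convex_Icc α β) hxt hxdot fun a ha t ht =>
        hM (a, t) ⟨ha, ht⟩
  have hmaps : MapsTo (fun q : ℝ × ℝ => (q.1, q.2, x q.1 q.2)) (Icc α β ×ˢ Icc 0 T) U :=
    fun q hq => hUmem q.1 hq.1 q.2 hq.2 _
  obtain ⟨δ₀, hδ₀, hδ₀T, hgrowth⟩ :=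
    isCompact_Icc.exists_forall_mul_le_integral_exp_integral_mul (γ := γ) (κ := 3 * γ / 4) hT
      (by positivity) (by linarith) (hSθcont.comp htraj hmaps) (hSxcont.comp htraj hmaps)
      fun a ha => by dsimp only [Function.comp]; rw [hx0 a ha]; exact hnondeg a ha
  refine ⟨δ₀, hδ₀, hδ₀T, fun δ hδ hδδ₀ ϑ hϑ ϑ₀ hϑ₀ => ?_⟩
  have hsub : Icc 0 δ ⊆ Icc 0 T := Icc_subset_Icc le_rfl (hδδ₀.trans hδ₀T)
  have hsq : ∀ t ∈ Icc 0 δ, (3 * γ / 4) ^ 2 * (ϑ - ϑ₀) ^ 2 * t ^ 2 ≤ (x ϑ t - x ϑ₀ t) ^ 2 := by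
    intro t ht
    have h := (convex_Icc α β).mul_abs_sub_le_abs_image_sub_of_le_deriv
      (fun a ha => hxdot a ha t (hsub ht)) (C := 3 * γ / 4 * t)
      (fun a ha => (hvar a ha t (hsub ht)).symm ▸
        hgrowth a ha t ⟨ht.1, ht.2.trans hδδ₀⟩) ϑ₀ hϑ₀ ϑ hϑ
    calc (3 * γ / 4) ^ 2 * (ϑ - ϑ₀) ^ 2 * t ^ 2 = (3 * γ / 4 * t * |ϑ - ϑ₀|) ^ 2 := by
          rw [mul_pow, sq_abs]; ring
      _ ≤ |x ϑ t - x ϑ₀ t| ^ 2 := pow_le_pow_left₀ (by have := ht.1; positivity) h 2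
      _ = (x ϑ t - x ϑ₀ t) ^ 2 := sq_abs _
  have hint : IntervalIntegrable (fun t => (x ϑ t - x ϑ₀ t) ^ 2) volume 0 δ :=
    ((((hxt ϑ hϑ).sub (hxt ϑ₀ hϑ₀)).pow 2).mono hsub).intervalIntegrable_of_Icc hδ.le
  calc γ ^ 2 * δ ^ 3 * (ϑ - ϑ₀) ^ 2 / 6 ≤ (3 * γ / 4) ^ 2 * (ϑ - ϑ₀) ^ 2 * δ ^ 3 / 3 := by
        have : 0 ≤ γ ^ 2 * δ ^ 3 * (ϑ - ϑ₀) ^ 2 := by positivity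
        linarith
    _ ≤ ∫ t in (0 : ℝ)..δ, (x ϑ t - x ϑ₀ t) ^ 2 :=
        mul_cube_div_three_le_integral_of_mul_sq_le hδ.le hint hsq

/-- Identifiability lower bound on a small interval: under the regularity and
non-degeneracy assumptions below there exists `δ₀ ∈ (0,T]` such that for every `δ ∈ (0,δ₀]` and
every pair `ϑ, ϑ₀` in the compact parameter interval `Θ = [α,β]`,
`∫_0^δ (x(ϑ,t) − x(ϑ₀,t))² dt ≥ γ² δ³ (ϑ − ϑ₀)² / 6`. -/
theorem identifiability_small_interval_lower_bound
    (T x0 α β γ : ℝ) (hT : 0 < T) (hαβ : α < β) (hγ : 0 < γ)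
    (S Sθ Sx : ℝ → ℝ → ℝ → ℝ)
    (U : Set (ℝ × ℝ × ℝ)) (hU : IsOpen U)
    (hUmem : ∀ ϑ ∈ Set.Icc α β, ∀ t ∈ Set.Icc (0 : ℝ) T, ∀ y : ℝ, (ϑ, t, y) ∈ U)
    (hScont : ContinuousOn (fun q : ℝ × ℝ × ℝ => S q.1 q.2.1 q.2.2) U)
    (hSθ : ∀ q ∈ U, HasDerivAt (fun a => S a q.2.1 q.2.2) (Sθ q.1 q.2.1 q.2.2) q.1)
    (hSx : ∀ q ∈ U, HasDerivAt (fun z => S q.1 q.2.1 z) (Sx q.1 q.2.1 q.2.2) q.2.2)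
    (hSθcont : ContinuousOn (fun q : ℝ × ℝ × ℝ => Sθ q.1 q.2.1 q.2.2) U)
    (hSxcont : ContinuousOn (fun q : ℝ × ℝ × ℝ => Sx q.1 q.2.1 q.2.2) U)
    (x xdot : ℝ → ℝ → ℝ)
    (hx0 : ∀ ϑ ∈ Set.Icc α β, x ϑ 0 = x0)
    (hxode : ∀ ϑ ∈ Set.Icc α β, ∀ t ∈ Set.Icc (0 : ℝ) T,
      HasDerivAt (fun s => x ϑ s) (S ϑ t (x ϑ t)) t)
    (hxdot : ∀ ϑ ∈ Set.Icc α β, ∀ t ∈ Set.Icc (0 : ℝ) T,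
      HasDerivAt (fun a => x a t) (xdot ϑ t) ϑ)
    (hxdotcont : ContinuousOn (fun q : ℝ × ℝ => xdot q.1 q.2)
      (Set.Icc α β ×ˢ Set.Icc (0 : ℝ) T))
    (hvar : ∀ ϑ ∈ Set.Icc α β, ∀ t ∈ Set.Icc (0 : ℝ) T,
      xdot ϑ t = ∫ s in (0 : ℝ)..t,
        Real.exp (∫ r in s..t, Sx ϑ r (x ϑ r)) * Sθ ϑ s (x ϑ s))
    (hnondeg : ∀ ϑ ∈ Set.Icc α β, γ ≤ Sθ ϑ 0 x0) :
    ∃ δ₀ : ℝ, 0 < δ₀ ∧ δ₀ ≤ T ∧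
      ∀ δ : ℝ, 0 < δ → δ ≤ δ₀ →
        ∀ ϑ ∈ Set.Icc α β, ∀ ϑ₀ ∈ Set.Icc α β,
          γ ^ 2 * δ ^ 3 * (ϑ - ϑ₀) ^ 2 / 6 ≤
            ∫ t in (0 : ℝ)..δ, (x ϑ t - x ϑ₀ t) ^ 2 :=
  identifiability_small_interval_lower_bound_general T x0 α β γ hT hγ S Sθ Sx U hUmem hSθcont
    hSxcont x xdot hx0 hxode hxdot hxdotcont hvar hnondeg
end

section
/- Decomposition of Bayesian information: under the assumptions below, ∫_a^b ∫_Ω ( ∂/∂θ ln[ q(θ,ω) p(θ) ] )² q(θ,ω) p(θ) dμ(ω) dθ = ∫_a^b I(θ) p(θ) dθ + I_p, where I(θ) := ∫_Ω ( ∂q/∂θ (θ,ω) / q(θ,ω) )² q(θ,ω) dμ(ω) is the Fisher information at θ and I_p := ∫_a^b p'(θ)² / p(θ) dθ is the information of the prior. -/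
/-!
Pointwise in `θ`, the score of `q p` is the score of `q` shifted by the constant `p'(θ)/p(θ)`.
Expanding the square, the cross term is a multiple of `∫ ∂_θ q dμ = 0` and the constant term is
`(p'/p)² ∫ q dμ = (p'/p)²`, so the inner integral is `I(θ) p(θ) + p'(θ)²/p(θ)`; integrating
over `[a, b]` gives the decomposition.
-/

open MeasureTheory

theorem div_sq_mul_self (x y : ℝ) : (x / y) ^ 2 * y = x ^ 2 / y := by
  rcases eq_or_ne y 0 with rfl | hy
  · simp
  · field_simp

theorem integral_div_add_const_sq_mul {Ω : Type*} [MeasurableSpace Ω] {μ : Measure Ω}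
    {f g : Ω → ℝ} (c : ℝ) (hf : ∀ ω, f ω ≠ 0) (hf_one : ∫ ω, f ω ∂μ = 1)
    (hg : Integrable g μ) (hg_zero : ∫ ω, g ω ∂μ = 0)
    (hgf : Integrable (fun ω => (g ω / f ω) ^ 2 * f ω) μ) :
    ∫ ω, (g ω / f ω + c) ^ 2 * f ω ∂μ = ∫ ω, (g ω / f ω) ^ 2 * f ω ∂μ + c ^ 2 := by
  have hf_int : Integrable f μ := .of_integral_ne_zero (by simp [hf_one])
  have hexpand : ∀ ω, (g ω / f ω + c) ^ 2 * f ω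
      = (g ω / f ω) ^ 2 * f ω + (2 * c * g ω + c ^ 2 * f ω) := by
    intro ω
    field_simp [hf ω]
    ring
  have hlin : Integrable (fun ω => 2 * c * g ω + c ^ 2 * f ω) μ :=
    (hg.const_mul _).add (hf_int.const_mul _)
  simp only [hexpand]
  rw [integral_add hgf hlin, integral_add (hg.const_mul _) (hf_int.const_mul _),
    integral_const_mul, integral_const_mul, hg_zero, hf_one]
  ring

theorem bayesian_information_decomposition_general
    {Ω : Type*} [MeasurableSpace Ω] (μ : Measure Ω)
    (a b : ℝ) (hab : a < b)
    (q qθ : ℝ → Ω → ℝ)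
    (hqpos : ∀ θ : ℝ, ∀ ω : Ω, 0 < q θ ω)
    -- normalization and unbiasedness of the score:
    (hqnorm : ∀ θ ∈ Set.Icc a b, (∫ ω, q θ ω ∂μ) = 1)
    (hqθint : ∀ θ ∈ Set.Icc a b, Integrable (fun ω => qθ θ ω) μ)
    (hscore : ∀ θ ∈ Set.Icc a b, (∫ ω, qθ θ ω ∂μ) = 0)
    (p : ℝ → ℝ)
    -- finiteness of the Fisher information and of the prior information:
    (hI : ∀ θ ∈ Set.Icc a b, Integrable (fun ω => (qθ θ ω / q θ ω) ^ 2 * q θ ω) μ)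
    (hIpint : IntervalIntegrable
      (fun θ => (∫ ω, (qθ θ ω / q θ ω) ^ 2 * q θ ω ∂μ) * p θ) volume a b)
    (hIp : IntervalIntegrable (fun θ => (deriv p θ) ^ 2 / p θ) volume a b) :
    (∫ θ in a..b, ∫ ω,
        (qθ θ ω / q θ ω + deriv p θ / p θ) ^ 2 * q θ ω * p θ ∂μ)
      = (∫ θ in a..b, (∫ ω, (qθ θ ω / q θ ω) ^ 2 * q θ ω ∂μ) * p θ)
        + ∫ θ in a..b, (deriv p θ) ^ 2 / p θ := by
  have hinner : Set.EqOn
      (fun θ => ∫ ω, (qθ θ ω / q θ ω + deriv p θ / p θ) ^ 2 * q θ ω * p θ ∂μ)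
      (fun θ => (∫ ω, (qθ θ ω / q θ ω) ^ 2 * q θ ω ∂μ) * p θ + (deriv p θ) ^ 2 / p θ)
      (Set.uIcc a b) := by
    intro θ hθ
    rw [Set.uIcc_of_le hab.le] at hθ
    dsimp only
    rw [integral_mul_const, integral_div_add_const_sq_mul _ (fun ω => (hqpos θ ω).ne')
      (hqnorm θ hθ) (hqθint θ hθ) (hscore θ hθ) (hI θ hθ), add_mul, div_sq_mul_self]
  rw [intervalIntegral.integral_congr hinner, intervalIntegral.integral_add hIpint hIp]

/-- Decomposition of Bayesian information:
`∫_a^b ∫_Ω (∂_θ ln(qp))² q p dμ dθ = ∫_a^b I(θ) p(θ) dθ + I_p`, where the score of `q p` is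
`∂_θ ln(q(θ,ω)p(θ)) = qθ(θ,ω)/q(θ,ω) + p'(θ)/p(θ)`, `I(θ) = ∫_Ω (qθ/q)² q dμ` is the Fisher
information at `θ` and `I_p = ∫_a^b p'(θ)²/p(θ) dθ` is the information of the prior. -/
theorem bayesian_information_decomposition
    {Ω : Type*} [MeasurableSpace Ω] (μ : Measure Ω) [SigmaFinite μ]
    (a b : ℝ) (hab : a < b)
    (q qθ : ℝ → Ω → ℝ)
    (hqmeas : Measurable fun pr : ℝ × Ω => q pr.1 pr.2)
    (hqθmeas : Measurable fun pr : ℝ × Ω => qθ pr.1 pr.2)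
    (hqpos : ∀ θ : ℝ, ∀ ω : Ω, 0 < q θ ω)
    (hqd : ∀ ω : Ω, ∀ θ : ℝ, HasDerivAt (fun θ' => q θ' ω) (qθ θ ω) θ)
    (hqdc : ∀ ω : Ω, Continuous fun θ => qθ θ ω)
    -- normalization and unbiasedness of the score:
    (hqnorm : ∀ θ ∈ Set.Icc a b, (∫ ω, q θ ω ∂μ) = 1)
    (hqθint : ∀ θ ∈ Set.Icc a b, Integrable (fun ω => qθ θ ω) μ)
    (hscore : ∀ θ ∈ Set.Icc a b, (∫ ω, qθ θ ω ∂μ) = 0)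
    (p : ℝ → ℝ) (hp1 : ContDiff ℝ 1 p) (hpa : p a = 0) (hpb : p b = 0)
    (hpnn : ∀ θ ∈ Set.Icc a b, 0 ≤ p θ) (hppos : ∀ θ ∈ Set.Ioo a b, 0 < p θ)
    (hpint : (∫ θ in a..b, p θ) = 1)
    -- finiteness of the Fisher information and of the prior information:
    (hI : ∀ θ ∈ Set.Icc a b, Integrable (fun ω => (qθ θ ω / q θ ω) ^ 2 * q θ ω) μ)
    (hIpint : IntervalIntegrable
      (fun θ => (∫ ω, (qθ θ ω / q θ ω) ^ 2 * q θ ω ∂μ) * p θ) volume a b)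
    (hIp : IntervalIntegrable (fun θ => (deriv p θ) ^ 2 / p θ) volume a b)
    -- applicability of Fubini's theorem:
    (hFub : Integrable
      (fun pr : ℝ × Ω =>
        (qθ pr.1 pr.2 / q pr.1 pr.2 + deriv p pr.1 / p pr.1) ^ 2 * q pr.1 pr.2 * p pr.1)
      ((volume.restrict (Set.Icc a b)).prod μ)) :
    (∫ θ in a..b, ∫ ω,
        (qθ θ ω / q θ ω + deriv p θ / p θ) ^ 2 * q θ ω * p θ ∂μ)
      = (∫ θ in a..b, (∫ ω, (qθ θ ω / q θ ω) ^ 2 * q θ ω ∂μ) * p θ)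
        + ∫ θ in a..b, (deriv p θ) ^ 2 / p θ :=
  bayesian_information_decomposition_general μ a b hab q qθ hqpos hqnorm hqθint hscore p hI hIpint
    hIp
end
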